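/- Let λ be a probability measure on X and suppose the transition kernel satisfies Q(·|x,a) ≪ λ for all (x,a). If the initial distribution η is absolutely continuous with respect to λ, then the X-marginal μ^X_{η,π₁,π₂} of the occupation measure of any pair of history-dependent policies is absolutely continuous with respect to λ; if moreover η is equivalent to λ, then μ^X_{η,π₁,π₂} is equivalent to λ. -/

import Mathlib

open MeasureTheory ProbabilityTheory Filter Topology
open scoped NNReal ENNReal

universe u

/-- The space of histories `H_t = (X × A₁ × A₂)^t × X`, built recursively:
`H_0 = X` and `H_{t+1} = H_t × (A₁ × A₂) × X`. -/
def Hist (X A₁ A₂ : Type u) : ℕ → Type u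
  | 0 => X
  | t + 1 => Hist X A₁ A₂ t × (A₁ × A₂) × X

noncomputable instance histMeasurableSpace {X A₁ A₂ : Type u} [MeasurableSpace X]
    [MeasurableSpace A₁] [MeasurableSpace A₂] :
    ∀ t, MeasurableSpace (Hist X A₁ A₂ t)
  | 0 => ‹MeasurableSpace X›
  | t + 1 =>
    letI := histMeasurableSpace (X := X) (A₁ := A₁) (A₂ := A₂) t
    inferInstanceAs (MeasurableSpace (Hist X A₁ A₂ t × (A₁ × A₂) × X))

/-- The current state `x_t` of a history `h_t ∈ H_t`. -/
def curState {X A₁ A₂ : Type u} : ∀ t, Hist X A₁ A₂ t → X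
  | 0 => id
  | _ + 1 => fun h => h.2.2

lemma measurable_curState {X A₁ A₂ : Type u} [MeasurableSpace X]
    [MeasurableSpace A₁] [MeasurableSpace A₂] :
    ∀ t, Measurable (curState (X := X) (A₁ := A₁) (A₂ := A₂) t)
  | 0 => measurable_id
  | _ + 1 => measurable_snd.comp measurable_snd

/-- The distribution on histories `H_t` induced by the initial distribution `η`, the
transition kernel `Q` and the history-dependent policies `(π₁, π₂)`: the initial state has
distribution `η`, at each stage the actions are drawn independently from `π₁^t(·|h_t)` and
`π₂^t(·|h_t)`, and the next state from `Q(·|x_t, a_t, b_t)`. -/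
noncomputable def traj {X A₁ A₂ : Type u} [MeasurableSpace X]
    [MeasurableSpace A₁] [MeasurableSpace A₂]
    (η : Measure X) (Q : Kernel (X × A₁ × A₂) X)
    (π₁ : ∀ t, Kernel (Hist X A₁ A₂ t) A₁) (π₂ : ∀ t, Kernel (Hist X A₁ A₂ t) A₂) :
    ∀ t, Measure (Hist X A₁ A₂ t)
  | 0 => η
  | t + 1 =>
    (traj η Q π₁ π₂ t) ⊗ₘ
      ((π₁ t ×ₖ π₂ t) ⊗ₖ
        (Q.comap (fun p : Hist X A₁ A₂ t × (A₁ × A₂) => (curState t p.1, p.2))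
          (((measurable_curState t).comp measurable_fst).prodMk measurable_snd)))

/-- The joint law of the state-action triple `(X_t, A_t, B_t)` at time `t`. -/
noncomputable def stepLaw {X A₁ A₂ : Type u} [MeasurableSpace X]
    [MeasurableSpace A₁] [MeasurableSpace A₂]
    (η : Measure X) (Q : Kernel (X × A₁ × A₂) X)
    (π₁ : ∀ t, Kernel (Hist X A₁ A₂ t) A₁) (π₂ : ∀ t, Kernel (Hist X A₁ A₂ t) A₂)
    (t : ℕ) : Measure (X × A₁ × A₂) :=
  (traj η Q π₁ π₂ (t + 1)).map
    (fun h : Hist X A₁ A₂ t × (A₁ × A₂) × X => (curState t h.1, h.2.1))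

/-- The occupation measure of the pair of history-dependent policies `(π₁, π₂)` with initial
distribution `η`: `μ_{η,π₁,π₂} = (1-β) ∑_t β^t law(X_t, A_t, B_t)`. -/
noncomputable def occHD {X A₁ A₂ : Type u} [MeasurableSpace X]
    [MeasurableSpace A₁] [MeasurableSpace A₂]
    (β : ℝ≥0) (η : Measure X) (Q : Kernel (X × A₁ × A₂) X)
    (π₁ : ∀ t, Kernel (Hist X A₁ A₂ t) A₁) (π₂ : ∀ t, Kernel (Hist X A₁ A₂ t) A₂) :
    Measure (X × A₁ × A₂) :=
  Measure.sum fun t : ℕ => ((1 - β) * β ^ t) • stepLaw η Q π₁ π₂ t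

/-!
The `X`-marginal of the occupation measure is `∑ₜ (1 - β) βᵗ law(Xₜ)`. For `t ≥ 1` the state
`Xₜ` is drawn from `Q(·|X_{t-1}, A_{t-1}, B_{t-1}) ≪ λ`, so `law(Xₜ) ≪ λ` whatever the policies
do, while `law(X₀) = η`. Conversely the `t = 0` term `(1 - β) η` lies below `μ^X`, so `η ≪ μ^X`.
-/

section AbsolutelyContinuous

variable {α β γ : Type*} [MeasurableSpace α] [MeasurableSpace β] [MeasurableSpace γ]

lemma MeasureTheory.Measure.comp_absolutelyContinuous {μ : Measure α} {κ : Kernel α β}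
    {ν : Measure β} (h : ∀ a, κ a ≪ ν) : κ ∘ₘ μ ≪ ν := by
  refine Measure.AbsolutelyContinuous.mk fun s hs hs0 => ?_
  rw [Measure.bind_apply hs κ.aemeasurable]
  simp [h _ hs0]

lemma ProbabilityTheory.Kernel.snd_compProd_absolutelyContinuous {κ : Kernel α β}
    [IsSFiniteKernel κ] {η : Kernel (α × β) γ} [IsSFiniteKernel η] {ν : Measure γ}
    (h : ∀ p, η p ≪ ν) (a : α) : Kernel.snd (κ ⊗ₖ η) a ≪ ν := by
  refine Measure.AbsolutelyContinuous.mk fun s hs hs0 => ?_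
  rw [Kernel.snd_apply' _ _ hs, Kernel.compProd_apply (measurable_snd hs)]
  simp [Set.preimage, h _ hs0]

end AbsolutelyContinuous

section Trajectory

variable {X A₁ A₂ : Type u} [MeasurableSpace X] [MeasurableSpace A₁] [MeasurableSpace A₂]
  {η : Measure X} {Q : Kernel (X × A₁ × A₂) X}
  {π₁ : ∀ t, Kernel (Hist X A₁ A₂ t) A₁} {π₂ : ∀ t, Kernel (Hist X A₁ A₂ t) A₂}

variable (Q π₁ π₂) in
/-- The kernel drawing `((a_t, b_t), x_{t+1})` from the history `h_t`. -/
noncomputable def stageKernel (t : ℕ) : Kernel (Hist X A₁ A₂ t) ((A₁ × A₂) × X) :=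
  (π₁ t ×ₖ π₂ t) ⊗ₖ
    (Q.comap (fun p : Hist X A₁ A₂ t × (A₁ × A₂) => (curState t p.1, p.2))
      (((measurable_curState t).comp measurable_fst).prodMk measurable_snd))

lemma traj_succ (t : ℕ) :
    traj η Q π₁ π₂ (t + 1) = traj η Q π₁ π₂ t ⊗ₘ stageKernel Q π₁ π₂ t := rfl

variable (η Q π₁ π₂) in
noncomputable def stateLaw (t : ℕ) : Measure X :=
  (traj η Q π₁ π₂ t).map (curState t)

lemma stateLaw_zero : stateLaw η Q π₁ π₂ 0 = η :=
  Measure.map_id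

variable [IsMarkovKernel Q] [∀ t, IsMarkovKernel (π₁ t)] [∀ t, IsMarkovKernel (π₂ t)]

instance isMarkovKernel_stageKernel (t : ℕ) : IsMarkovKernel (stageKernel Q π₁ π₂ t) := by
  unfold stageKernel
  infer_instance

instance isProbabilityMeasure_traj [IsProbabilityMeasure η] :
    ∀ t, IsProbabilityMeasure (traj η Q π₁ π₂ t)
  | 0 => ‹IsProbabilityMeasure η›
  | t + 1 => by
    have := isProbabilityMeasure_traj t
    exact inferInstanceAs
      (IsProbabilityMeasure (traj η Q π₁ π₂ t ⊗ₘ stageKernel Q π₁ π₂ t))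

lemma stepLaw_map_fst [IsProbabilityMeasure η] (t : ℕ) :
    (stepLaw η Q π₁ π₂ t).map Prod.fst = stateLaw η Q π₁ π₂ t := by
  have hpair : Measurable fun h : Hist X A₁ A₂ t × (A₁ × A₂) × X => (curState t h.1, h.2.1) :=
    ((measurable_curState t).comp measurable_fst).prodMk (measurable_fst.comp measurable_snd)
  have hfirst : (stepLaw η Q π₁ π₂ t).map Prod.fst =
      (traj η Q π₁ π₂ t ⊗ₘ stageKernel Q π₁ π₂ t).fst.map (curState t) := by
    rw [Measure.fst, Measure.map_map (measurable_curState t) measurable_fst,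
      show stepLaw η Q π₁ π₂ t = (traj η Q π₁ π₂ t ⊗ₘ stageKernel Q π₁ π₂ t).map
        (fun h => (curState t h.1, h.2.1)) from rfl,
      Measure.map_map measurable_fst hpair]
    rfl
  rw [hfirst, Measure.fst_compProd, stateLaw]

lemma stateLaw_succ_absolutelyContinuous [IsProbabilityMeasure η] {lam : Measure X}
    (hQ : ∀ q, Q q ≪ lam) (t : ℕ) : stateLaw η Q π₁ π₂ (t + 1) ≪ lam := by
  have hlast : stateLaw η Q π₁ π₂ (t + 1) =
      (traj η Q π₁ π₂ t ⊗ₘ stageKernel Q π₁ π₂ t).snd.map Prod.snd := by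
    rw [Measure.snd, Measure.map_map measurable_snd measurable_snd]
    rfl
  rw [hlast, Measure.snd_compProd, Measure.map_comp _ _ measurable_snd, ← Kernel.snd_eq]
  exact Measure.comp_absolutelyContinuous
    (Kernel.snd_compProd_absolutelyContinuous fun _ => hQ _)

lemma stateLaw_absolutelyContinuous [IsProbabilityMeasure η] {lam : Measure X}
    (hQ : ∀ q, Q q ≪ lam) (hη : η ≪ lam) : ∀ t, stateLaw η Q π₁ π₂ t ≪ lam
  | 0 => by rwa [stateLaw_zero]
  | t + 1 => stateLaw_succ_absolutelyContinuous hQ t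

lemma occHD_map_fst [IsProbabilityMeasure η] (β : ℝ≥0) :
    (occHD β η Q π₁ π₂).map Prod.fst =
      Measure.sum fun t => ((1 - β) * β ^ t) • stateLaw η Q π₁ π₂ t := by
  simp_rw [occHD, Measure.map_sum measurable_fst.aemeasurable,
    Measure.map_smul, stepLaw_map_fst]

end Trajectory

theorem stmt8_general {X A₁ A₂ : Type u} [MeasurableSpace X] [MeasurableSpace A₁] [MeasurableSpace A₂]
    (β : ℝ≥0) (hβ1 : β < 1)
    (lam : Measure X)
    (η : Measure X) [IsProbabilityMeasure η]
    (Q : Kernel (X × A₁ × A₂) X) [IsMarkovKernel Q]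
    (hQ : ∀ q, Q q ≪ lam)
    (π₁ : ∀ t, Kernel (Hist X A₁ A₂ t) A₁) (π₂ : ∀ t, Kernel (Hist X A₁ A₂ t) A₂)
    (hm₁ : ∀ t, IsMarkovKernel (π₁ t)) (hm₂ : ∀ t, IsMarkovKernel (π₂ t)) :
    (η ≪ lam → (occHD β η Q π₁ π₂).map Prod.fst ≪ lam) ∧
    (η ≪ lam → lam ≪ η →
      (occHD β η Q π₁ π₂).map Prod.fst ≪ lam ∧ lam ≪ (occHD β η Q π₁ π₂).map Prod.fst) := by
  rw [occHD_map_fst]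
  have hac (hη : η ≪ lam) :
      (Measure.sum fun t => ((1 - β) * β ^ t) • stateLaw η Q π₁ π₂ t) ≪ lam :=
    Measure.absolutelyContinuous_sum_left fun t =>
      (stateLaw_absolutelyContinuous hQ hη t).smul_left _
  have hinit : η ≪ Measure.sum fun t => ((1 - β) * β ^ t) • stateLaw η Q π₁ π₂ t := by
    refine Measure.absolutelyContinuous_sum_right 0 ?_
    rw [pow_zero, mul_one, stateLaw_zero, ENNReal.smul_def]
    exact Measure.absolutelyContinuous_smul (ENNReal.coe_ne_zero.mpr (tsub_pos_of_lt hβ1).ne')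
  exact ⟨hac, fun hη hlη => ⟨hac hη, hlη.trans hinit⟩⟩

/-- Suppose `Q(·|x,a) ≪ λ` for all `(x,a)`. If the initial distribution
`η ≪ λ`, then the `X`-marginal of the occupation measure of any pair of history-dependent
policies satisfies `μ^X_{η,π₁,π₂} ≪ λ`; if moreover `η ∼ λ`, then `μ^X_{η,π₁,π₂} ∼ λ`. -/
theorem stmt8 {X A₁ A₂ : Type u} [MeasurableSpace X]
    [MetricSpace A₁] [CompactSpace A₁] [MeasurableSpace A₁] [BorelSpace A₁]
    [MetricSpace A₂] [CompactSpace A₂] [MeasurableSpace A₂] [BorelSpace A₂]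
    (β : ℝ≥0) (hβ0 : 0 < β) (hβ1 : β < 1)
    (lam : Measure X) [IsProbabilityMeasure lam]
    (η : Measure X) [IsProbabilityMeasure η]
    (Q : Kernel (X × A₁ × A₂) X) [IsMarkovKernel Q]
    (hQ : ∀ q, Q q ≪ lam)
    (π₁ : ∀ t, Kernel (Hist X A₁ A₂ t) A₁) (π₂ : ∀ t, Kernel (Hist X A₁ A₂ t) A₂)
    (hm₁ : ∀ t, IsMarkovKernel (π₁ t)) (hm₂ : ∀ t, IsMarkovKernel (π₂ t)) :
    (η ≪ lam → (occHD β η Q π₁ π₂).map Prod.fst ≪ lam) ∧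
    (η ≪ lam → lam ≪ η →
      (occHD β η Q π₁ π₂).map Prod.fst ≪ lam ∧ lam ≪ (occHD β η Q π₁ π₂).map Prod.fst) :=
  stmt8_general β hβ1 lam η Q hQ π₁ π₂ hm₁ hm₂
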